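/- arXiv:1507.05041 — 2 statements merged into one kernel-verified Lean document; each statement's English description precedes it below -/
import Mathlib

section
/- Let A be a path connected subset of the Manhattan plane ℝ₁² and p ∈ ℝ₁². If every one of the four quadrants of p contains a point of A, then p belongs to the double hatching L(A) of A. -/
/-! If `A` meets both closed horizontal rays from `p`, then `p` lies on a horizontal segment
between two points of `A`. Otherwise all points of `A` on the horizontal line through `p` lie
strictly on one side of `p`, say the right, and the two left quadrants supply points of `A`
below and above that line. The closed ray from `p` pointing left together with the ray
pointing down separates the open lower-left quadrant from the rest of the plane, so the
connected set `A` must meet the downward ray; likewise it meets the upward ray, which puts `p`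
in `L_y(A) ⊆ L(A)`. -/

open Set

/-- The taxicab (ℓ¹) distance on the plane, making `ℝ × ℝ` the Manhattan plane ℝ₁². -/
def taxiDist (p q : ℝ × ℝ) : ℝ := |p.1 - q.1| + |p.2 - q.2|

/-- Horizontal hatching `L_x(A)`. -/
def hatchX (A : Set (ℝ × ℝ)) : Set (ℝ × ℝ) :=
  {p | ∃ a ∈ A, ∃ b ∈ A, a.2 = p.2 ∧ b.2 = p.2 ∧ a.1 ≤ p.1 ∧ p.1 ≤ b.1}

/-- Vertical hatching `L_y(A)`. -/
def hatchY (A : Set (ℝ × ℝ)) : Set (ℝ × ℝ) :=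
  {p | ∃ a ∈ A, ∃ b ∈ A, a.1 = p.1 ∧ b.1 = p.1 ∧ a.2 ≤ p.2 ∧ p.2 ≤ b.2}

/-- Double hatching `L(A) = L_x(L_y(A))`. -/
def doubleHatch (A : Set (ℝ × ℝ)) : Set (ℝ × ℝ) := hatchX (hatchY A)

/-- The real sign `+1` or `-1` associated to a Boolean sign. -/
def sgn (ε : Bool) : ℝ := if ε then 1 else -1

/-- The `ε₁ε₂`-quadrant of the point `p`:
`Q_p^{ε₁ε₂} = {q | ε₁(q₁ - p₁) ≥ 0 ∧ ε₂(q₂ - p₂) ≥ 0}`. -/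
def quadrant (p : ℝ × ℝ) (ε₁ ε₂ : Bool) : Set (ℝ × ℝ) :=
  {q | 0 ≤ sgn ε₁ * (q.1 - p.1) ∧ 0 ≤ sgn ε₂ * (q.2 - p.2)}

@[simp] lemma sgn_true : sgn true = 1 := rfl

@[simp] lemma sgn_false : sgn false = -1 := rfl

lemma sgn_ne_zero (ε : Bool) : sgn ε ≠ 0 := by
  cases ε <;> norm_num

lemma sgn_not (ε : Bool) : sgn (!ε) = -sgn ε := by
  cases ε <;> norm_num

lemma subset_hatchX (A : Set (ℝ × ℝ)) : A ⊆ hatchX A :=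
  fun q hq => ⟨q, hq, q, hq, rfl, rfl, le_rfl, le_rfl⟩

lemma subset_hatchY (A : Set (ℝ × ℝ)) : A ⊆ hatchY A :=
  fun q hq => ⟨q, hq, q, hq, rfl, rfl, le_rfl, le_rfl⟩

lemma hatchX_mono {A B : Set (ℝ × ℝ)} (h : A ⊆ B) : hatchX A ⊆ hatchX B :=
  fun _ ⟨a, ha, b, hb, hab⟩ => ⟨a, h ha, b, h hb, hab⟩

lemma mem_hatchX_of_forall_sgn {A : Set (ℝ × ℝ)} {p : ℝ × ℝ}
    (h : ∀ ε, ∃ q ∈ A, q.2 = p.2 ∧ 0 ≤ sgn ε * (q.1 - p.1)) : p ∈ hatchX A := by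
  obtain ⟨a, ha, ha₂, ha₁⟩ := h false
  obtain ⟨b, hb, hb₂, hb₁⟩ := h true
  simp only [sgn_false, sgn_true] at ha₁ hb₁
  exact ⟨a, ha, b, hb, ha₂, hb₂, by linarith, by linarith⟩

lemma mem_hatchY_of_forall_sgn {A : Set (ℝ × ℝ)} {p : ℝ × ℝ}
    (h : ∀ ε, ∃ q ∈ A, q.1 = p.1 ∧ 0 ≤ sgn ε * (q.2 - p.2)) : p ∈ hatchY A := by
  obtain ⟨a, ha, ha₁, ha₂⟩ := h false
  obtain ⟨b, hb, hb₁, hb₂⟩ := h true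
  simp only [sgn_false, sgn_true] at ha₂ hb₂
  exact ⟨a, ha, b, hb, ha₁, hb₁, by linarith, by linarith⟩

lemma IsPreconnected.exists_mem_vertical_ray {A : Set (ℝ × ℝ)} (hA : IsPreconnected A)
    {p : ℝ × ℝ} {ε₁ ε₂ : Bool} (ha : (A ∩ quadrant p ε₁ ε₂).Nonempty)
    (hb : ∃ b ∈ A, sgn ε₂ * (b.2 - p.2) ≤ 0)
    (hline : ∀ q ∈ A, q.2 = p.2 → sgn ε₁ * (q.1 - p.1) < 0) :
    ∃ q ∈ A, q.1 = p.1 ∧ 0 ≤ sgn ε₂ * (q.2 - p.2) := by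
  by_contra! hray
  have hx : ∀ q ∈ A, sgn ε₁ * (q.1 - p.1) = 0 → sgn ε₂ * (q.2 - p.2) < 0 := fun q hq h0 =>
    hray q hq (by linarith [(mul_eq_zero.mp h0).resolve_left (sgn_ne_zero ε₁)])
  have hy : ∀ q ∈ A, sgn ε₂ * (q.2 - p.2) = 0 → sgn ε₁ * (q.1 - p.1) < 0 := fun q hq h0 =>
    hline q hq (by linarith [(mul_eq_zero.mp h0).resolve_left (sgn_ne_zero ε₂)])
  set u := {q : ℝ × ℝ | 0 < sgn ε₁ * (q.1 - p.1) ∧ 0 < sgn ε₂ * (q.2 - p.2)}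
  set v := {q : ℝ × ℝ | sgn ε₁ * (q.1 - p.1) < 0 ∨ sgn ε₂ * (q.2 - p.2) < 0}
  have hu_open : IsOpen u := by
    simp only [u, ofPred_and]
    exact (isOpen_lt (by fun_prop) (by fun_prop)).inter (isOpen_lt (by fun_prop) (by fun_prop))
  have hv_open : IsOpen v := by
    simp only [v, ofPred_or]
    exact (isOpen_lt (by fun_prop) (by fun_prop)).union (isOpen_lt (by fun_prop) (by fun_prop))
  have mem_u : ∀ q ∈ A, q ∈ quadrant p ε₁ ε₂ → q ∈ u := fun q hq ⟨hq₁, hq₂⟩ =>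
    ⟨hq₁.lt_of_ne fun h => (hx q hq h.symm).not_ge hq₂,
      hq₂.lt_of_ne fun h => (hy q hq h.symm).not_ge hq₁⟩
  have hcover : A ⊆ u ∪ v := by
    intro q hq
    by_cases hv : q ∈ v
    · exact Or.inr hv
    · simp only [v, mem_ofPred_eq, not_or, not_lt] at hv
      exact Or.inl (mem_u q hq hv)
  obtain ⟨a, haA, haQ⟩ := ha
  obtain ⟨b, hbA, hb₂⟩ := hb
  have hbv : b ∈ v := by
    rcases hb₂.lt_or_eq with hlt | heq
    · exact Or.inr hlt
    · exact Or.inl (hy b hbA heq)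
  obtain ⟨q, -, ⟨hqx, hqy⟩, hqv⟩ :=
    hA u v hu_open hv_open hcover ⟨a, haA, mem_u a haA haQ⟩ ⟨b, hbA, hbv⟩
  rcases hqv with h | h <;> linarith

lemma IsPreconnected.mem_hatchY_of_quadrants {A : Set (ℝ × ℝ)} (hA : IsPreconnected A)
    {p : ℝ × ℝ} {ε₁ : Bool} (h : ∀ ε₂, (A ∩ quadrant p ε₁ ε₂).Nonempty)
    (hline : ∀ q ∈ A, q.2 = p.2 → sgn ε₁ * (q.1 - p.1) < 0) : p ∈ hatchY A := by
  refine mem_hatchY_of_forall_sgn fun ε₂ => hA.exists_mem_vertical_ray (h ε₂) ?_ hline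
  obtain ⟨b, hbA, -, hb₂⟩ := h (!ε₂)
  rw [sgn_not, neg_mul, neg_nonneg] at hb₂
  exact ⟨b, hbA, hb₂⟩

/-- If `A` is path connected and every one of the four quadrants of `p` contains a point
of `A`, then `p` belongs to the double hatching `L(A)`. -/
theorem mem_doubleHatch_of_quadrants (A : Set (ℝ × ℝ)) (hA : IsPathConnected A)
    (p : ℝ × ℝ) (h : ∀ ε₁ ε₂ : Bool, (A ∩ quadrant p ε₁ ε₂).Nonempty) :
    p ∈ doubleHatch A := by
  by_cases hline : ∃ ε₁, ∀ q ∈ A, q.2 = p.2 → sgn ε₁ * (q.1 - p.1) < 0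
  · obtain ⟨ε₁, hε₁⟩ := hline
    exact subset_hatchX _ (hA.isConnected.isPreconnected.mem_hatchY_of_quadrants (h ε₁) hε₁)
  · push Not at hline
    exact hatchX_mono (subset_hatchY A) (mem_hatchX_of_forall_sgn hline)
end

section
/- Let A be a compact and path connected subset of the Manhattan plane ℝ₁². Then the double hatching L(A), regarded as a metric space with the metric induced from ℝ₁², is hyperconvex. -/
open Set

/-- A subset `S` of the Manhattan plane, regarded as a metric space with the induced
taxicab metric, is hyperconvex: for every family of points of `S` and nonnegative radii
with `d₁(x i, x j) ≤ r i + r j`, the closed balls (in `S`) have a common point. -/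
def TaxiHyperconvexOn (S : Set (ℝ × ℝ)) : Prop :=
  ∀ (I : Type) (x : I → ℝ × ℝ) (r : I → ℝ),
    (∀ i, x i ∈ S) → (∀ i, 0 ≤ r i) →
    (∀ i j, taxiDist (x i) (x j) ≤ r i + r j) →
    ∃ y ∈ S, ∀ i, taxiDist (x i) y ≤ r i

/-!
Write `T = L(A)`. It is compact and path connected, and it is its own horizontal and vertical
hatching; for `L_y` this rests on `L_x(L_y A) = L_y(L_x A)`, which holds because a path in `A`
between two points on either side of a vertical line, both at height `≥ η`, meets that line
inside `L_x(A)` at height `≥ η`. The same crossing property makes `T` closed under the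
coordinatewise median of three points.

Compactness reduces hyperconvexity to finitely many balls. Let `y ∈ T` minimise
`F p = maxᵢ (d(xᵢ, p) - rᵢ)` and suppose `ε = F y > 0`. Iterated medians of `y` with the points
`xᵢ` at which the maximum is attained give `z ∈ T` in the box between `y` and each such `xᵢ`.
If `z = y`, then `y` lies in the box spanned by two of these points `xᵢ, xⱼ`, so
`d(xᵢ, xⱼ) = rᵢ + rⱼ + 2ε`, which is excluded. Otherwise the connected set `median y z '' T`
contains points of `T` between `y` and `z` arbitrarily close to `y`, and at those `F < ε`.
-/

def median {α : Type*} [Lattice α] (a b c : α) : α := a ⊓ b ⊔ b ⊓ c ⊔ c ⊓ a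

section Median

variable {α : Type*} [Lattice α] (a b c : α)

lemma median_mem_uIcc_ab : median a b c ∈ uIcc a b :=
  ⟨le_sup_left.trans le_sup_left,
    sup_le (sup_le inf_le_sup (inf_le_left.trans le_sup_right)) (inf_le_right.trans le_sup_left)⟩

lemma median_mem_uIcc_bc : median a b c ∈ uIcc b c := by
  have h : median a b c = median b c a := by simp only [median]; ac_rfl
  exact h ▸ median_mem_uIcc_ab b c a

lemma median_mem_uIcc_ac : median a b c ∈ uIcc a c := by
  have h : median a b c = median c a b := by simp only [median]; ac_rfl
  rw [uIcc_comm]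
  exact h ▸ median_mem_uIcc_ab c a b

lemma median_self_left : median a b a = a := by
  simp [median]

lemma median_self_right : median a b b = b := by
  simp [median]

lemma median_eq_or {β : Type*} [LinearOrder β] (a b c : β) :
    median a b c = a ∨ median a b c = b ∨ median a b c = c := by
  rcases le_total a b with hab | hab <;> rcases le_total b c with hbc | hbc <;>
    rcases le_total a c with hac | hac <;> simp [median, *]

end Median

lemma continuous_median (y z : ℝ × ℝ) : Continuous (median y z) := by
  change Continuous fun p : ℝ × ℝ => (median y.1 z.1 p.1, median y.2 z.2 p.2)
  simp only [median]
  fun_prop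

def IsMedianClosed {α : Type*} [Lattice α] (T : Set α) : Prop :=
  ∀ u ∈ T, ∀ v ∈ T, ∀ w ∈ T, median u v w ∈ T

lemma mem_uIcc_of_median_eq_left {y z a b : ℝ} (hz : z ∈ uIcc y b) (hzy : z ≠ y)
    (h : median y z a = y) : y ∈ uIcc b a := by
  have hy := median_mem_uIcc_bc y z a
  rw [h, mem_uIcc] at hy
  rw [mem_uIcc] at hz ⊢
  rcases hzy.lt_or_gt with h' | h' <;> grind

lemma abs_sub_add_abs_sub_of_mem_uIcc {a b x : ℝ} (h : x ∈ uIcc a b) :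
    |a - x| + |x - b| = |a - b| := by
  rcases mem_uIcc.1 h with ⟨h1, h2⟩ | ⟨h1, h2⟩
  · rw [abs_of_nonpos (by linarith), abs_of_nonpos (by linarith), abs_of_nonpos (by linarith)]
    ring
  · rw [abs_of_nonneg (by linarith), abs_of_nonneg (by linarith), abs_of_nonneg (by linarith)]
    ring

lemma taxiDist_comm (p q : ℝ × ℝ) : taxiDist p q = taxiDist q p := by
  simp only [taxiDist, abs_sub_comm]

lemma taxiDist_pos {p q : ℝ × ℝ} (h : p ≠ q) : 0 < taxiDist p q := by
  rcases ne_or_eq p.1 q.1 with h1 | h1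
  · exact add_pos_of_pos_of_nonneg (abs_pos.2 (sub_ne_zero.2 h1)) (abs_nonneg _)
  · have h2 : p.2 ≠ q.2 := fun h2 => h (Prod.ext h1 h2)
    exact add_pos_of_nonneg_of_pos (abs_nonneg _) (abs_pos.2 (sub_ne_zero.2 h2))

lemma continuous_taxiDist (q : ℝ × ℝ) : Continuous (taxiDist q) := by
  unfold taxiDist
  fun_prop

lemma taxiDist_add_taxiDist_of_mem_uIcc {a b p : ℝ × ℝ} (h : p ∈ uIcc a b) :
    taxiDist a p + taxiDist p b = taxiDist a b := by
  rw [uIcc_prod_eq, mem_prod] at h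
  have h1 := abs_sub_add_abs_sub_of_mem_uIcc h.1
  have h2 := abs_sub_add_abs_sub_of_mem_uIcc h.2
  simp only [taxiDist]
  linarith

lemma hatchX_hatchX_subset (A : Set (ℝ × ℝ)) : hatchX (hatchX A) ⊆ hatchX A := by
  rintro p ⟨u, ⟨a, ha, _, _, ha2, _, ha1, _⟩, v, ⟨_, _, b, hb, _, hb2, _, hb1⟩, hu2, hv2, hu1, hv1⟩
  exact ⟨a, ha, b, hb, ha2.trans hu2, hb2.trans hv2, ha1.trans hu1, hv1.trans hb1⟩

lemma hatchY_hatchY_subset (A : Set (ℝ × ℝ)) : hatchY (hatchY A) ⊆ hatchY A := by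
  rintro p ⟨u, ⟨a, ha, _, _, ha1, _, ha2, _⟩, v, ⟨_, _, b, hb, _, hb1, _, hb2⟩, hu1, hv1, hu2, hv2⟩
  exact ⟨a, ha, b, hb, ha1.trans hu1, hb1.trans hv1, ha2.trans hu2, hv2.trans hb2⟩

lemma hatchX_image_swap (A : Set (ℝ × ℝ)) : hatchX (Prod.swap '' A) = Prod.swap '' hatchY A := by
  ext p
  simp only [image_swap_eq_preimage_swap, mem_preimage, hatchX, hatchY, mem_ofPred_eq]
  constructor
  · rintro ⟨a, ha, b, hb, h⟩
    exact ⟨a.swap, ha, b.swap, hb, h⟩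
  · rintro ⟨a, ha, b, hb, h⟩
    exact ⟨a.swap, by simpa using ha, b.swap, by simpa using hb, h⟩

lemma hatchY_image_swap (A : Set (ℝ × ℝ)) : hatchY (Prod.swap '' A) = Prod.swap '' hatchX A := by
  ext p
  simp only [image_swap_eq_preimage_swap, mem_preimage, hatchX, hatchY, mem_ofPred_eq]
  constructor
  · rintro ⟨a, ha, b, hb, h⟩
    exact ⟨a.swap, ha, b.swap, hb, h⟩
  · rintro ⟨a, ha, b, hb, h⟩
    exact ⟨a.swap, by simpa using ha, b.swap, by simpa using hb, h⟩

lemma hatchX_eq_image_swap (A : Set (ℝ × ℝ)) :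
    hatchX A = Prod.swap '' hatchY (Prod.swap '' A) := by
  rw [hatchY_image_swap, image_image]
  simp

lemma mem_segment_of_fst_eq {a b p : ℝ × ℝ} (hab : a.1 = b.1) :
    p ∈ segment ℝ a b ↔ p.1 = a.1 ∧ p.2 ∈ uIcc a.2 b.2 := by
  obtain ⟨a1, a2⟩ := a
  obtain ⟨b1, b2⟩ := b
  obtain rfl : a1 = b1 := hab
  rw [← Prod.image_mk_segment_right, segment_eq_uIcc]
  constructor
  · rintro ⟨y, hy, rfl⟩
    exact ⟨rfl, hy⟩
  · rintro ⟨h1, h2⟩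
    exact ⟨p.2, h2, Prod.ext h1.symm rfl⟩

lemma mem_hatchY_iff_mem_segment {A : Set (ℝ × ℝ)} {p : ℝ × ℝ} :
    p ∈ hatchY A ↔ ∃ a ∈ A, ∃ b ∈ A, a.1 = b.1 ∧ p ∈ segment ℝ a b := by
  constructor
  · rintro ⟨a, ha, b, hb, ha1, hb1, ha2, hb2⟩
    exact ⟨a, ha, b, hb, ha1.trans hb1.symm,
      (mem_segment_of_fst_eq (ha1.trans hb1.symm)).2 ⟨ha1.symm, mem_uIcc_of_le ha2 hb2⟩⟩
  · rintro ⟨a, ha, b, hb, hab, hp⟩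
    obtain ⟨hp1, hp2⟩ := (mem_segment_of_fst_eq hab).1 hp
    rcases mem_uIcc.1 hp2 with ⟨h1, h2⟩ | ⟨h1, h2⟩
    · exact ⟨a, ha, b, hb, hp1.symm, hab.symm.trans hp1.symm, h1, h2⟩
    · exact ⟨b, hb, a, ha, hab.symm.trans hp1.symm, hp1.symm, h1, h2⟩

lemma hatchY_eq_image_lineMap (A : Set (ℝ × ℝ)) :
    hatchY A = (fun q : ((ℝ × ℝ) × (ℝ × ℝ)) × ℝ => AffineMap.lineMap q.1.1 q.1.2 q.2) ''
      ((A ×ˢ A ∩ {q | q.1.1 = q.2.1}) ×ˢ Icc 0 1) := by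
  ext p
  simp only [mem_hatchY_iff_mem_segment, segment_eq_image_lineMap, mem_image, mem_prod,
    mem_inter_iff, mem_ofPred_eq]
  constructor
  · rintro ⟨a, ha, b, hb, hab, t, ht, rfl⟩
    exact ⟨((a, b), t), ⟨⟨⟨ha, hb⟩, hab⟩, ht⟩, rfl⟩
  · rintro ⟨⟨⟨a, b⟩, t⟩, ⟨⟨⟨ha, hb⟩, hab⟩, ht⟩, rfl⟩
    exact ⟨a, ha, b, hb, hab, t, ht, rfl⟩

lemma isCompact_hatchY {A : Set (ℝ × ℝ)} (hA : IsCompact A) : IsCompact (hatchY A) := by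
  rw [hatchY_eq_image_lineMap]
  exact (((hA.prod hA).inter_right (isClosed_eq (by fun_prop) (by fun_prop))).prod
    isCompact_Icc).image (by fun_prop)

lemma isCompact_hatchX {A : Set (ℝ × ℝ)} (hA : IsCompact A) : IsCompact (hatchX A) := by
  rw [hatchX_eq_image_swap]
  exact (isCompact_hatchY (hA.image continuous_swap)).image continuous_swap

lemma isPathConnected_hatchY {A : Set (ℝ × ℝ)} (hA : IsPathConnected A) :
    IsPathConnected (hatchY A) := by
  obtain ⟨x₀, hx₀, hjoin⟩ := hA
  refine ⟨x₀, subset_hatchY A hx₀, fun p hp => ?_⟩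
  obtain ⟨a, ha, b, hb, hab, hp⟩ := mem_hatchY_iff_mem_segment.1 hp
  have hap : JoinedIn (segment ℝ a p) a p :=
    ((convex_segment a p).isPathConnected ⟨a, left_mem_segment ℝ a p⟩).joinedIn a
      (left_mem_segment ℝ a p) p (right_mem_segment ℝ a p)
  refine ((hjoin ha).mono (subset_hatchY A)).trans (hap.mono fun q hq => ?_)
  exact mem_hatchY_iff_mem_segment.2
    ⟨a, ha, b, hb, hab, (convex_segment a b).segment_subset (left_mem_segment ℝ a b) hp hq⟩

lemma isPathConnected_hatchX {A : Set (ℝ × ℝ)} (hA : IsPathConnected A) :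
    IsPathConnected (hatchX A) := by
  rw [hatchX_eq_image_swap]
  exact (isPathConnected_hatchY (hA.image continuous_swap)).image continuous_swap

lemma exists_crossing {f : ℝ → ℝ × ℝ} (hf : Continuous f) {ξ η : ℝ} (h0 : (f 0).1 ≤ ξ)
    (h1 : ξ ≤ (f 1).1) (h0' : η ≤ (f 0).2) (h1' : η ≤ (f 1).2) :
    ∃ s ∈ Icc (0 : ℝ) 1, ∃ t ∈ Icc (0 : ℝ) 1,
      (f s).1 ≤ ξ ∧ ξ ≤ (f t).1 ∧ (f s).2 = (f t).2 ∧ η ≤ (f s).2 := by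
  by_cases hline : ∃ s ∈ Icc (0 : ℝ) 1, (f s).1 = ξ ∧ η ≤ (f s).2
  · obtain ⟨s, hs, hs1, hs2⟩ := hline
    exact ⟨s, hs, s, hs, hs1.le, hs1.ge, rfl, hs2⟩
  push Not at hline
  have hf1 : Continuous fun s => (f s).1 := by fun_prop
  have hf2 : Continuous fun s => (f s).2 := by fun_prop
  -- Between the last visit `tm` to the closed upper-left quadrant before the first visit `tp` to
  -- the closed upper-right quadrant the path stays below `η`, so `f tm` and `f tp` have height `η`.
  set R := Icc (0 : ℝ) 1 ∩ {s | ξ ≤ (f s).1 ∧ η ≤ (f s).2}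
  have hR : IsClosed R :=
    isClosed_Icc.inter ((isClosed_le continuous_const hf1).inter (isClosed_le continuous_const hf2))
  have hRbdd : BddBelow R := ⟨0, fun s hs => hs.1.1⟩
  obtain ⟨⟨htp0, htp1⟩, htpξ, htpη⟩ := hR.csInf_mem ⟨1, ⟨⟨zero_le_one, le_rfl⟩, h1, h1'⟩⟩ hRbdd
  set tp := sInf R
  set L := Icc 0 tp ∩ {s | (f s).1 ≤ ξ ∧ η ≤ (f s).2}
  have hL : IsClosed L :=
    isClosed_Icc.inter ((isClosed_le hf1 continuous_const).inter (isClosed_le continuous_const hf2))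
  have hLbdd : BddAbove L := ⟨tp, fun s hs => hs.1.2⟩
  obtain ⟨⟨htm0, htmtp⟩, htmξ, htmη⟩ := hL.csSup_mem ⟨0, ⟨⟨le_rfl, htp0⟩, h0, h0'⟩⟩ hLbdd
  set tm := sSup L
  have htmξ' : (f tm).1 < ξ :=
    htmξ.lt_of_ne fun h => (hline tm ⟨htm0, htmtp.trans htp1⟩ h).not_ge htmη
  have htpξ' : ξ < (f tp).1 := htpξ.lt_of_ne fun h => (hline tp ⟨htp0, htp1⟩ h.symm).not_ge htpη
  have hlt : tm < tp := htmtp.lt_of_ne fun h => by rw [h] at htmξ'; linarith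
  have hgap : Ioo tm tp ⊆ {s | (f s).2 ≤ η} := by
    intro s ⟨hs1, hs2⟩
    show (f s).2 ≤ η
    by_contra! hs
    rcases le_total (f s).1 ξ with h | h
    · exact hs1.not_ge (le_csSup hLbdd ⟨⟨htm0.trans hs1.le, hs2.le⟩, h, hs.le⟩)
    · exact hs2.not_ge (csInf_le hRbdd ⟨⟨htm0.trans hs1.le, hs2.le.trans htp1⟩, h, hs.le⟩)
  have hclosure := closure_minimal hgap (isClosed_le hf2 continuous_const)
  rw [closure_Ioo hlt.ne] at hclosure
  have htm_eq : (f tm).2 = η := le_antisymm (hclosure (left_mem_Icc.2 hlt.le)) htmη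
  have htp_eq : (f tp).2 = η := le_antisymm (hclosure (right_mem_Icc.2 hlt.le)) htpη
  exact ⟨tm, ⟨htm0, htmtp.trans htp1⟩, tp, ⟨htp0, htp1⟩, htmξ, htpξ, htm_eq.trans htp_eq.symm,
    htm_eq.ge⟩

lemma IsPathConnected.exists_mem_hatchX_above {A : Set (ℝ × ℝ)} (hA : IsPathConnected A)
    {a b : ℝ × ℝ} (ha : a ∈ A) (hb : b ∈ A) {ξ η : ℝ} (hξ : ξ ∈ uIcc a.1 b.1) (ha' : η ≤ a.2)
    (hb' : η ≤ b.2) : ∃ q ∈ hatchX A, q.1 = ξ ∧ η ≤ q.2 := by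
  wlog hab : a.1 ≤ b.1 generalizing a b
  · exact this hb ha (uIcc_comm a.1 b.1 ▸ hξ) hb' ha' (le_of_not_ge hab)
  rw [uIcc_of_le hab] at hξ
  obtain ⟨γ, hγ⟩ := hA.joinedIn a ha b hb
  have hmem : ∀ s ∈ Icc (0 : ℝ) 1, γ.extend s ∈ A := fun s hs => by
    rw [γ.extend_apply hs]; exact hγ _
  obtain ⟨s, hs, t, ht, hs1, ht1, hst, hs2⟩ := exists_crossing γ.continuous_extend
    (by simpa using hξ.1) (by simpa using hξ.2) (by simpa using ha') (by simpa using hb')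
  exact ⟨(ξ, (γ.extend s).2), ⟨_, hmem s hs, _, hmem t ht, rfl, hst.symm, hs1, ht1⟩, rfl, hs2⟩

lemma IsPathConnected.exists_mem_hatchX_below {A : Set (ℝ × ℝ)} (hA : IsPathConnected A)
    {a b : ℝ × ℝ} (ha : a ∈ A) (hb : b ∈ A) {ξ η : ℝ} (hξ : ξ ∈ uIcc a.1 b.1) (ha' : a.2 ≤ η)
    (hb' : b.2 ≤ η) : ∃ q ∈ hatchX A, q.1 = ξ ∧ q.2 ≤ η := by
  wlog hab : a.1 ≤ b.1 generalizing a b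
  · exact this hb ha (uIcc_comm a.1 b.1 ▸ hξ) hb' ha' (le_of_not_ge hab)
  rw [uIcc_of_le hab] at hξ
  obtain ⟨γ, hγ⟩ := hA.joinedIn a ha b hb
  have hmem : ∀ s ∈ Icc (0 : ℝ) 1, γ.extend s ∈ A := fun s hs => by
    rw [γ.extend_apply hs]; exact hγ _
  obtain ⟨s, hs, t, ht, hs1, ht1, hst, hs2⟩ :=
    exists_crossing (f := fun s => ((γ.extend s).1, -(γ.extend s).2)) (η := -η) (by fun_prop)
      (by simpa using hξ.1) (by simpa using hξ.2) (by simpa using ha') (by simpa using hb')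
  exact ⟨(ξ, (γ.extend s).2), ⟨_, hmem s hs, _, hmem t ht, rfl, (neg_inj.1 hst).symm, hs1, ht1⟩,
    rfl, neg_le_neg_iff.1 hs2⟩

lemma IsPathConnected.hatchX_hatchY_subset {A : Set (ℝ × ℝ)} (hA : IsPathConnected A) :
    hatchX (hatchY A) ⊆ hatchY (hatchX A) := by
  rintro p ⟨u, ⟨um, hum, up, hup, hum1, hup1, hum2, hup2⟩, v, ⟨vm, hvm, vp, hvp, hvm1, hvp1, hvm2,
    hvp2⟩, hu2, hv2, hu1, hv1⟩
  obtain ⟨q, hq, hq1, hq2⟩ := hA.exists_mem_hatchX_below hum hvm (ξ := p.1)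
    (mem_uIcc_of_le (hum1 ▸ hu1) (hvm1 ▸ hv1)) (hu2 ▸ hum2) (hv2 ▸ hvm2)
  obtain ⟨q', hq', hq'1, hq'2⟩ := hA.exists_mem_hatchX_above hup hvp (ξ := p.1)
    (mem_uIcc_of_le (hup1 ▸ hu1) (hvp1 ▸ hv1)) (hu2 ▸ hup2) (hv2 ▸ hvp2)
  exact ⟨q, hq, q', hq', hq1, hq'1, hq2, hq'2⟩

lemma IsPathConnected.hatchY_hatchX_subset {A : Set (ℝ × ℝ)} (hA : IsPathConnected A) :
    hatchY (hatchX A) ⊆ hatchX (hatchY A) := by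
  have h := (hA.image continuous_swap).hatchX_hatchY_subset
  rw [hatchY_image_swap, hatchX_image_swap, hatchX_image_swap, hatchY_image_swap] at h
  exact (image_subset_image_iff Prod.swap_injective).1 h

lemma IsPathConnected.doubleHatch_eq {A : Set (ℝ × ℝ)} (hA : IsPathConnected A) :
    doubleHatch A = hatchY (hatchX A) :=
  hA.hatchX_hatchY_subset.antisymm hA.hatchY_hatchX_subset

lemma IsPathConnected.mk_mem_of_fst_eq_of_snd_eq {T : Set (ℝ × ℝ)} (hT : IsPathConnected T)
    (hX : hatchX T ⊆ T) (hY : hatchY T ⊆ T) ⦃u v w : ℝ × ℝ⦄ (hu : u ∈ T) (hv : v ∈ T)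
    (hw : w ∈ T) ⦃ξ η : ℝ⦄ (hu1 : u.1 = ξ) (hv2 : v.2 = η) (hξ : ξ ∈ uIcc v.1 w.1)
    (hη : η ∈ uIcc u.2 w.2) : (ξ, η) ∈ T := by
  rcases mem_uIcc.1 hη with ⟨huη, hηw⟩ | ⟨hwη, hηu⟩
  · obtain ⟨q, hq, hq1, hq2⟩ := hT.exists_mem_hatchX_above hv hw hξ hv2.ge hηw
    exact hY ⟨u, hu, q, hX hq, hu1, hq1, huη, hq2⟩
  · obtain ⟨q, hq, hq1, hq2⟩ := hT.exists_mem_hatchX_below hv hw hξ hv2.le hwη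
    exact hY ⟨q, hX hq, u, hu, hq1, hu1, hq2, hηu⟩

lemma IsPathConnected.isMedianClosed {T : Set (ℝ × ℝ)} (hT : IsPathConnected T)
    (hX : hatchX T ⊆ T) (hY : hatchY T ⊆ T) : IsMedianClosed T := by
  intro u hu v hv w hw
  change (median u.1 v.1 w.1, median u.2 v.2 w.2) ∈ T
  have key := hT.mk_mem_of_fst_eq_of_snd_eq hX hY
  rcases median_eq_or u.1 v.1 w.1 with hξ | hξ | hξ <;>
    rcases median_eq_or u.2 v.2 w.2 with hη | hη | hη
  · rwa [hξ, hη]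
  · exact key hu hv hw hξ.symm hη.symm (median_mem_uIcc_bc ..) (median_mem_uIcc_ac ..)
  · exact key hu hw hv hξ.symm hη.symm (uIcc_comm v.1 w.1 ▸ median_mem_uIcc_bc ..)
      (median_mem_uIcc_ab ..)
  · exact key hv hu hw hξ.symm hη.symm (median_mem_uIcc_ac ..) (median_mem_uIcc_bc ..)
  · rwa [hξ, hη]
  · exact key hv hw hu hξ.symm hη.symm (uIcc_comm u.1 w.1 ▸ median_mem_uIcc_ac ..)
      (uIcc_comm u.2 v.2 ▸ median_mem_uIcc_ab ..)
  · exact key hw hu hv hξ.symm hη.symm (median_mem_uIcc_ab ..)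
      (uIcc_comm v.2 w.2 ▸ median_mem_uIcc_bc ..)
  · exact key hw hv hu hξ.symm hη.symm (uIcc_comm u.1 v.1 ▸ median_mem_uIcc_ab ..)
      (uIcc_comm u.2 w.2 ▸ median_mem_uIcc_ac ..)
  · rwa [hξ, hη]

lemma IsMedianClosed.exists_gate {T : Set (ℝ × ℝ)} (hT : IsMedianClosed T) {y : ℝ × ℝ}
    (hy : y ∈ T) {S : Finset (ℝ × ℝ)} (hS : S.Nonempty) (hST : ↑S ⊆ T) :
    ∃ z ∈ T, (∀ a ∈ S, z ∈ uIcc y a) ∧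
      (z.1 = y.1 → ∃ a ∈ S, ∃ b ∈ S, y.1 ∈ uIcc a.1 b.1) ∧
      (z.2 = y.2 → ∃ a ∈ S, ∃ b ∈ S, y.2 ∈ uIcc a.2 b.2) := by
  induction hS using Finset.Nonempty.cons_induction with
  | singleton a =>
    refine ⟨a, hST (by simp), by simp, fun h => ⟨a, by simp, a, by simp, ?_⟩,
      fun h => ⟨a, by simp, a, by simp, ?_⟩⟩ <;> simp [h]
  | cons a S ha hS ih =>
    rw [Finset.coe_cons, insert_subset_iff] at hST
    obtain ⟨z, hz, hzS, hz1, hz2⟩ := ih hST.2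
    obtain ⟨b, hb⟩ := hS
    have hzb := uIcc_prod_eq y b ▸ hzS b hb
    refine ⟨median y z a, hT y hy z hz a hST.1, ?_, fun he => ?_, fun he => ?_⟩
    · simp only [Finset.mem_cons, forall_eq_or_imp]
      exact ⟨median_mem_uIcc_ac y z a,
        fun c hc => uIcc_subset_uIcc_left (hzS c hc) (median_mem_uIcc_ab y z a)⟩
    · by_cases hzy : z.1 = y.1
      · obtain ⟨c, hc, d, hd, h⟩ := hz1 hzy
        exact ⟨c, Finset.mem_cons_of_mem hc, d, Finset.mem_cons_of_mem hd, h⟩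
      · exact ⟨b, Finset.mem_cons_of_mem hb, a, Finset.mem_cons_self a S,
          mem_uIcc_of_median_eq_left hzb.1 hzy he⟩
    · by_cases hzy : z.2 = y.2
      · obtain ⟨c, hc, d, hd, h⟩ := hz2 hzy
        exact ⟨c, Finset.mem_cons_of_mem hc, d, Finset.mem_cons_of_mem hd, h⟩
      · exact ⟨b, Finset.mem_cons_of_mem hb, a, Finset.mem_cons_self a S,
          mem_uIcc_of_median_eq_left hzb.2 hzy he⟩

lemma exists_mem_uIcc_of_fst_of_snd {S : Set (ℝ × ℝ)} {y : ℝ × ℝ}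
    (h1 : ∃ a ∈ S, ∃ b ∈ S, y.1 ∈ uIcc a.1 b.1) (h2 : ∃ c ∈ S, ∃ d ∈ S, y.2 ∈ uIcc c.2 d.2) :
    ∃ a ∈ S, ∃ b ∈ S, y ∈ uIcc a b := by
  obtain ⟨a, ha, b, hb, hab⟩ := h1
  obtain ⟨c, hc, d, hd, hcd⟩ := h2
  simp only [uIcc_prod_eq, mem_prod]
  wlog hab' : a.1 ≤ b.1 generalizing a b
  · exact this b hb a ha (uIcc_comm a.1 b.1 ▸ hab) (le_of_not_ge hab')
  wlog hcd' : c.2 ≤ d.2 generalizing c d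
  · exact this d hd c hc (uIcc_comm c.2 d.2 ▸ hcd) (le_of_not_ge hcd')
  rw [uIcc_of_le hab'] at hab
  rw [uIcc_of_le hcd'] at hcd
  rcases le_total a.2 y.2 with ha2 | ha2 <;> rcases le_total b.2 y.2 with hb2 | hb2
  · rcases le_total y.1 d.1 with hd1 | hd1
    · exact ⟨a, ha, d, hd, mem_uIcc_of_le hab.1 hd1, mem_uIcc_of_le ha2 hcd.2⟩
    · exact ⟨d, hd, b, hb, mem_uIcc_of_le hd1 hab.2, mem_uIcc_of_ge hb2 hcd.2⟩
  · exact ⟨a, ha, b, hb, mem_uIcc_of_le hab.1 hab.2, mem_uIcc_of_le ha2 hb2⟩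
  · exact ⟨a, ha, b, hb, mem_uIcc_of_le hab.1 hab.2, mem_uIcc_of_ge hb2 ha2⟩
  · rcases le_total y.1 c.1 with hc1 | hc1
    · exact ⟨a, ha, c, hc, mem_uIcc_of_le hab.1 hc1, mem_uIcc_of_ge hcd.1 ha2⟩
    · exact ⟨c, hc, b, hb, mem_uIcc_of_le hc1 hab.2, mem_uIcc_of_le hcd.1 hb2⟩

lemma IsPreconnected.exists_mem_ne_of_isOpen {X : Type*} [TopologicalSpace X] [T1Space X]
    {s U : Set X} (hs : IsPreconnected s) {y z : X} (hy : y ∈ s) (hz : z ∈ s) (hyz : y ≠ z)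
    (hU : IsOpen U) (hyU : y ∈ U) : ∃ p ∈ s, p ∈ U ∧ p ≠ y := by
  have hcover : s ⊆ U ∪ {y}ᶜ := fun p _ => by
    by_cases h : p = y
    · exact Or.inl (h ▸ hyU)
    · exact Or.inr h
  obtain ⟨p, hps, hpU, hpy⟩ :=
    hs U {y}ᶜ hU isOpen_compl_singleton hcover ⟨y, hy, hyU⟩ ⟨z, hz, hyz.symm⟩
  exact ⟨p, hps, hpU, hpy⟩

lemma IsMedianClosed.exists_mem_uIcc_ne {T U : Set (ℝ × ℝ)} (hmed : IsMedianClosed T)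
    (hT : IsPreconnected T) {y z : ℝ × ℝ} (hy : y ∈ T) (hz : z ∈ T) (hyz : y ≠ z)
    (hU : IsOpen U) (hyU : y ∈ U) : ∃ p ∈ T, p ∈ uIcc y z ∧ p ∈ U ∧ p ≠ y := by
  obtain ⟨_, ⟨q, hq, rfl⟩, hpU, hpy⟩ :=
    (hT.image _ (continuous_median y z).continuousOn).exists_mem_ne_of_isOpen
      ⟨y, hy, median_self_left y z⟩ ⟨z, hz, median_self_right y z⟩ hyz hU hyU
  exact ⟨median y z q, hmed y hy z hz q hq, median_mem_uIcc_ab y z q, hpU, hpy⟩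

lemma IsMedianClosed.exists_forall_taxiDist_lt {T : Set (ℝ × ℝ)} (hmed : IsMedianClosed T)
    (hT : IsPreconnected T) {I : Type*} {t : Finset I} {x : I → ℝ × ℝ} {r : I → ℝ}
    (hx : ∀ i ∈ t, x i ∈ T) (hpair : ∀ i ∈ t, ∀ j ∈ t, taxiDist (x i) (x j) ≤ r i + r j)
    {y : ℝ × ℝ} (hy : y ∈ T) {ε : ℝ} (hε : 0 < ε) (hle : ∀ i ∈ t, taxiDist (x i) y ≤ r i + ε) :
    ∃ p ∈ T, ∀ i ∈ t, taxiDist (x i) p < r i + ε := by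
  classical
  set act := t.filter fun i => taxiDist (x i) y = r i + ε
  rcases act.eq_empty_or_nonempty with hact | hact
  · exact ⟨y, hy, fun i hi => (hle i hi).lt_of_ne fun h =>
      Finset.eq_empty_iff_forall_notMem.1 hact i (Finset.mem_filter.2 ⟨hi, h⟩)⟩
  obtain ⟨z, hz, hzS, hz1, hz2⟩ := hmed.exists_gate hy (hact.image x) (by
    intro p hp
    obtain ⟨i, hi, rfl⟩ := Finset.mem_image.1 hp
    exact hx i (Finset.mem_filter.1 hi).1)
  have hzy : z ≠ y := by
    rintro rfl
    obtain ⟨a, ha, b, hb, hyab⟩ := exists_mem_uIcc_of_fst_of_snd (hz1 rfl) (hz2 rfl)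
    simp only [Finset.coe_image, Finset.coe_filter, mem_image, mem_ofPred_eq, act] at ha hb
    obtain ⟨i, ⟨hi, hi'⟩, rfl⟩ := ha
    obtain ⟨j, ⟨hj, hj'⟩, rfl⟩ := hb
    have hsplit := taxiDist_add_taxiDist_of_mem_uIcc hyab
    rw [taxiDist_comm z] at hsplit
    linarith [hpair i hi j hj]
  set U := ⋂ i ∈ t.filter (fun i => taxiDist (x i) y < r i + ε), {p | taxiDist (x i) p < r i + ε}
  have hU : IsOpen U := isOpen_biInter_finset fun i _ =>
    isOpen_lt (continuous_taxiDist _) continuous_const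
  have hyU : y ∈ U := mem_iInter₂.2 fun i hi => (Finset.mem_filter.1 hi).2
  obtain ⟨p, hp, hpyz, hpU, hpy⟩ := hmed.exists_mem_uIcc_ne hT hy hz hzy.symm hU hyU
  refine ⟨p, hp, fun i hi => ?_⟩
  rcases (hle i hi).eq_or_lt with heq | hlt
  · have hbtw : p ∈ uIcc y (x i) := uIcc_subset_uIcc_left
      (hzS (x i) (Finset.mem_image_of_mem x (Finset.mem_filter.2 ⟨hi, heq⟩))) hpyz
    have hsplit := taxiDist_add_taxiDist_of_mem_uIcc hbtw
    rw [taxiDist_comm y (x i), taxiDist_comm _ (x i)] at hsplit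
    linarith [taxiDist_pos hpy.symm]
  · exact mem_iInter₂.1 hpU i (Finset.mem_filter.2 ⟨hi, hlt⟩)

lemma IsMedianClosed.exists_forall_taxiDist_le {T : Set (ℝ × ℝ)} (hmed : IsMedianClosed T)
    (hTc : IsCompact T) (hT : IsConnected T) {I : Type*} (t : Finset I) {x : I → ℝ × ℝ}
    {r : I → ℝ} (hx : ∀ i ∈ t, x i ∈ T)
    (hpair : ∀ i ∈ t, ∀ j ∈ t, taxiDist (x i) (x j) ≤ r i + r j) :
    ∃ p ∈ T, ∀ i ∈ t, taxiDist (x i) p ≤ r i := by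
  rcases t.eq_empty_or_nonempty with rfl | ht
  · exact ⟨_, hT.nonempty.some_mem, by simp⟩
  set F := fun p => t.sup' ht fun i => taxiDist (x i) p - r i
  have hF : Continuous F :=
    Continuous.finset_sup'_apply ht fun i _ => (continuous_taxiDist _).sub continuous_const
  obtain ⟨y, hy, hmin⟩ := hTc.exists_isMinOn hT.nonempty hF.continuousOn
  by_contra! hno
  have hε : 0 < F y := by
    obtain ⟨i, hi, h⟩ := hno y hy
    exact (sub_pos.2 h).trans_le (Finset.le_sup' (fun i => taxiDist (x i) y - r i) hi)
  obtain ⟨p, hp, hlt⟩ := hmed.exists_forall_taxiDist_lt hT.isPreconnected hx hpair hy hε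
    fun i hi => by linarith [Finset.le_sup' (fun i => taxiDist (x i) y - r i) hi]
  have hFp : F p < F y := (Finset.sup'_lt_iff ht).2 fun i hi => by linarith [hlt i hi]
  exact (hmin hp).not_gt hFp

lemma IsMedianClosed.taxiHyperconvexOn {T : Set (ℝ × ℝ)} (hmed : IsMedianClosed T)
    (hTc : IsCompact T) (hT : IsConnected T) : TaxiHyperconvexOn T := by
  intro I x r hx _ hpair
  obtain ⟨p, hpT, hp⟩ := hTc.inter_iInter_nonempty (fun i => {p | taxiDist (x i) p ≤ r i})
    (fun i => isClosed_le (continuous_taxiDist _) continuous_const) fun t => by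
      obtain ⟨p, hpT, hp⟩ :=
        hmed.exists_forall_taxiDist_le hTc hT t (fun i _ => hx i) fun i _ j _ => hpair i j
      exact ⟨p, hpT, mem_iInter₂.2 hp⟩
  exact ⟨p, hpT, mem_iInter.1 hp⟩

/-- For a compact and path connected subset `A` of the Manhattan plane, the double
hatching `L(A)`, with the induced taxicab metric, is hyperconvex. -/
theorem doubleHatch_hyperconvex_of_compact (A : Set (ℝ × ℝ)) (hcomp : IsCompact A)
    (hA : IsPathConnected A) : TaxiHyperconvexOn (doubleHatch A) := by
  have hpc : IsPathConnected (doubleHatch A) := isPathConnected_hatchX (isPathConnected_hatchY hA)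
  have hmed : IsMedianClosed (doubleHatch A) := by
    refine hpc.isMedianClosed (hatchX_hatchX_subset _) ?_
    rw [hA.doubleHatch_eq]
    exact hatchY_hatchY_subset _
  exact hmed.taxiHyperconvexOn (isCompact_hatchX (isCompact_hatchY hcomp)) hpc.isConnected
end
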